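/- arXiv:2303.16979 — 3 statements merged into one kernel-verified Lean document; each statement's English description precedes it below -/
import Mathlib

section
/- For every n ≥ 1, every sign vector ⋆ ∈ {+,−}^n and every t ∈ [−1,1]^n: (a) each member of β^⋆_n(t) is a box (all defining intervals are nondegenerate) contained in [−1,1]^{n+1}; (b) the 1 + 2^n boxes of β^⋆_n(t) have pairwise disjoint interiors; (c) the closed box has 0-th interval [1/2,1] ⊆ [0,1] and every open box has 0-th interval with left endpoint 0, so β^⋆_n(t) is a Swiss-Cheese configuration with one closed label and open labels {+,−}^n; (d) all interval endpoints of the boxes of β^⋆_n(t) depend continuously on t, so t ↦ β^⋆_n(t) is continuous. -/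
/-- The closed box in `ℝ^m` with lower endpoint vector `a` and upper endpoint vector `b`. -/
def RBox {m : ℕ} (a b : Fin m → ℝ) : Set (Fin m → ℝ) :=
  Set.univ.pi fun i => Set.Icc (a i) (b i)

/-- The ambient cube `[-1,1]^m`. -/
def unitCube (m : ℕ) : Set (Fin m → ℝ) := RBox (fun _ => -1) (fun _ => 1)

/-- `J(+) = [0,1]`, `J(-) = [-1,0]`: lower endpoint (`true` is `+`, `false` is `-`). -/
def jLo (b : Bool) : ℝ := if b then 0 else -1

/-- `J(+) = [0,1]`, `J(-) = [-1,0]`: upper endpoint. -/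
def jHi (b : Bool) : ℝ := if b then 1 else 0

/-- `σ_+(u) = min(0,u)` and `σ_-(u) = -1`. -/
noncomputable def sigmaF (b : Bool) (u : ℝ) : ℝ := if b then min 0 u else -1

/-- `τ_⋆(t) = max ({1/2} ∪ {(1 + t i)/2 : ⋆_i = -})`. -/
noncomputable def tauF {k : ℕ} (s : Fin k → Bool) (t : Fin k → ℝ) : ℝ :=
  Finset.fold max (1/2) (fun i => if s i then (1/2 : ℝ) else (1 + t i) / 2) Finset.univ

/-- Lower endpoint vectors of the boxes of the configuration `β^s_k(t)`:
the closed box (index `none`) is `[1/2,1] × ∏_{i=1}^k [σ_{s i}(t i), -σ_{-(s i)}(t i)]`, and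
the open box indexed by `some s'` is `[0, τ_{s·s'}(t)] × ∏_{i=1}^k J(s' i)`. -/
noncomputable def betaLo {k : ℕ} (s : Fin k → Bool) (t : Fin k → ℝ) :
    Option (Fin k → Bool) → Fin (k+1) → ℝ
  | none => Fin.cons (1/2) fun i => sigmaF (s i) (t i)
  | some s' => Fin.cons 0 fun i => jLo (s' i)

/-- Upper endpoint vectors of the boxes of the configuration `β^s_k(t)`. -/
noncomputable def betaHi {k : ℕ} (s : Fin k → Bool) (t : Fin k → ℝ) :
    Option (Fin k → Bool) → Fin (k+1) → ℝ
  | none => Fin.cons 1 fun i => -sigmaF (!(s i)) (t i)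
  | some s' => Fin.cons (tauF (fun i => s i == s' i) t) fun i => jHi (s' i)

lemma disjoint_pi_of_coord {m : ℕ} {f g : Fin m → Set ℝ} (i : Fin m)
    (h : Disjoint (f i) (g i)) : Disjoint (Set.univ.pi f) (Set.univ.pi g) := by
  rw [Set.disjoint_left]
  intro x hx hy
  exact Set.disjoint_left.mp h (hx i trivial) (hy i trivial)

lemma disjoint_Ioo' {a b c d : ℝ} (h : b ≤ c) :
    Disjoint (Set.Ioo a b) (Set.Ioo c d) := by
  rw [Set.disjoint_left]
  rintro x ⟨_, h1⟩ ⟨h2, _⟩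
  linarith

lemma interior_RBox {m : ℕ} (a b : Fin m → ℝ) :
    interior (RBox a b) = Set.univ.pi fun i => Set.Ioo (a i) (b i) := by
  rw [RBox, interior_pi_set Set.finite_univ]
  simp [interior_Icc]

lemma tauF_half_le {k : ℕ} (s : Fin k → Bool) (t : Fin k → ℝ) :
    (1/2 : ℝ) ≤ tauF s t :=
  Finset.le_fold_max _ |>.mpr (Or.inl le_rfl)

lemma tauF_le_one {k : ℕ} (s : Fin k → Bool) (t : Fin k → ℝ)
    (ht : ∀ i, t i ∈ Set.Icc (-1 : ℝ) 1) : tauF s t ≤ 1 := by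
  refine (Finset.fold_max_le _).mpr ⟨by norm_num, fun i _ => ?_⟩
  have := (ht i).2
  split <;> [norm_num; linarith]

lemma tauF_exists {k : ℕ} (s : Fin k → Bool) (t : Fin k → ℝ)
    (h : ¬ tauF s t ≤ 1/2) : ∃ i, s i = false ∧ 0 < t i := by
  by_contra hc
  push_neg at hc
  apply h
  refine (Finset.fold_max_le _).mpr ⟨le_rfl, fun i _ => ?_⟩
  cases hs : s i with
  | true => simp [hs]
  | false =>
      have := hc i hs
      simp only [hs, Bool.false_eq_true, if_false]
      linarith

lemma sigmaF_cont {k : ℕ} (b : Bool) (i : Fin k) :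
    Continuous fun a : Fin k → ℝ => sigmaF b (a i) := by
  cases b
  · simpa [sigmaF] using (continuous_const : Continuous fun _ : Fin k → ℝ => (-1:ℝ))
  · simpa [sigmaF] using continuous_const.min (continuous_apply i)

lemma fold_cont {k : ℕ} (s : Fin k → Bool) (S : Finset (Fin k)) :
    Continuous fun t : Fin k → ℝ =>
      Finset.fold max (1/2 : ℝ) (fun i => if s i then (1/2:ℝ) else (1 + t i)/2) S := by
  classical
  induction S using Finset.induction_on with
  | empty => simpa using (continuous_const : Continuous fun _ : Fin k → ℝ => (1/2:ℝ))
  | @insert a S ha ih =>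
      simp only [Finset.fold_insert ha]
      refine Continuous.max ?_ ih
      by_cases h : s a <;> simp only [h, if_true, if_false, Bool.false_eq_true]
      · exact continuous_const
      · exact (continuous_const.add (continuous_apply a)).div_const 2

lemma tauF_cont {k : ℕ} (s : Fin k → Bool) :
    Continuous fun t : Fin k → ℝ => tauF s t := fold_cont s Finset.univ

/-- For every `n ≥ 1` (here `n = m + 1`), every sign vector `s` and every
`t ∈ [-1,1]^n`: (a) each member of `β^s_n(t)` is a box contained in `[-1,1]^{n+1}`;
(b) the `1 + 2^n` boxes of `β^s_n(t)` have pairwise disjoint interiors; (c) the closed box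
has `0`-th interval `[1/2,1]` and every open box has `0`-th interval with left endpoint `0`,
so `β^s_n(t)` is a Swiss-Cheese configuration with one closed label and open labels
`{+,-}^n`; (d) all endpoints depend continuously on `t`. -/
theorem stmt5 (m : ℕ) (s : Fin (m+1) → Bool) (t : Fin (m+1) → ℝ)
    (ht : ∀ i, t i ∈ Set.Icc (-1 : ℝ) 1) :
    -- (a)
    (∀ o i, betaLo s t o i < betaHi s t o i) ∧
    (∀ o, RBox (betaLo s t o) (betaHi s t o) ⊆ unitCube (m+2)) ∧
    -- (b)
    (∀ o o' : Option (Fin (m+1) → Bool), o ≠ o' →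
      Disjoint (interior (RBox (betaLo s t o) (betaHi s t o)))
        (interior (RBox (betaLo s t o') (betaHi s t o')))) ∧
    -- (c)
    (betaLo s t none 0 = 1/2 ∧ betaHi s t none 0 = 1 ∧
      ∀ s' : Fin (m+1) → Bool, betaLo s t (some s') 0 = 0) ∧
    -- (d)
    Continuous (fun u : Fin (m+1) → ℝ =>
      fun o : Option (Fin (m+1) → Bool) => (betaLo s u o, betaHi s u o)) := by
  have hmin_le : ∀ i, min 0 (t i) ≤ 0 := fun i => min_le_left _ _
  have hmin_ge : ∀ i, (-1:ℝ) ≤ min 0 (t i) := fun i => le_min (by norm_num) (ht i).1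
  have hLo : ∀ o i, (-1:ℝ) ≤ betaLo s t o i := by
    rintro (_ | s') i
    · induction i using Fin.cases with
      | zero => norm_num [betaLo]
      | succ i =>
          simp only [betaLo, Fin.cons_succ]
          cases hs : s i <;> simp [sigmaF, hs]
          exact (ht i).1
    · induction i using Fin.cases with
      | zero => norm_num [betaLo]
      | succ i => cases hs : s' i <;> norm_num [betaLo, jLo, hs, Fin.cons_succ]
  have hHi : ∀ o i, betaHi s t o i ≤ 1 := by
    rintro (_ | s') i
    · induction i using Fin.cases with
      | zero => norm_num [betaHi]
      | succ i =>
          simp only [betaHi, Fin.cons_succ]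
          cases hs : s i <;> simp [sigmaF, hs] <;> linarith [hmin_ge i]
    · induction i using Fin.cases with
      | zero =>
          simp only [betaHi, Fin.cons_zero]
          exact tauF_le_one _ t ht
      | succ i => cases hs : s' i <;> norm_num [betaHi, jHi, hs, Fin.cons_succ]
  refine ⟨?_, ?_, ?_, ?_, ?_⟩
  · -- (a) strictness
    rintro (_ | s') i
    · induction i using Fin.cases with
      | zero => norm_num [betaLo, betaHi]
      | succ i =>
          simp only [betaLo, betaHi, Fin.cons_succ]
          cases hs : s i <;> simp [sigmaF, hs] <;> linarith [hmin_le i]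
    · induction i using Fin.cases with
      | zero =>
          simp only [betaLo, betaHi, Fin.cons_zero]
          exact lt_of_lt_of_le (by norm_num) (tauF_half_le _ t)
      | succ i => cases hs : s' i <;> norm_num [betaLo, betaHi, jLo, jHi, hs, Fin.cons_succ]
  · -- (a) containment
    intro o x hx
    simp only [RBox, Set.mem_univ_pi] at hx
    simp only [unitCube, RBox, Set.mem_univ_pi]
    intro i
    exact ⟨le_trans (hLo o i) (hx i).1, le_trans (hx i).2 (hHi o i)⟩
  · -- (b)
    have hJ : ∀ (a b : Bool), a ≠ b →
        Disjoint (Set.Ioo (jLo a) (jHi a)) (Set.Ioo (jLo b) (jHi b)) := by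
      rintro (_|_) (_|_) h
      · exact absurd rfl h
      · exact disjoint_Ioo' (by norm_num [jHi, jLo])
      · exact (disjoint_Ioo' (by norm_num [jHi, jLo])).symm
      · exact absurd rfl h
    have key : ∀ s' : Fin (m+1) → Bool,
        Disjoint (interior (RBox (betaLo s t none) (betaHi s t none)))
          (interior (RBox (betaLo s t (some s')) (betaHi s t (some s')))) := by
      intro s'
      rw [interior_RBox, interior_RBox]
      by_cases hτ : tauF (fun i => s i == s' i) t ≤ 1/2
      · refine disjoint_pi_of_coord 0 ?_
        simp only [betaLo, betaHi, Fin.cons_zero]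
        exact (disjoint_Ioo' hτ).symm
      · obtain ⟨i, hmis, hpos⟩ := tauF_exists _ t hτ
        have hne : s i ≠ s' i := by
          intro h
          rw [h] at hmis
          simp at hmis
        refine disjoint_pi_of_coord i.succ ?_
        simp only [betaLo, betaHi, Fin.cons_succ]
        have hmin0 : min 0 (t i) = 0 := min_eq_left hpos.le
        cases hs : s i with
        | false =>
            have hs' : s' i = true := by
              cases h' : s' i with
              | false => exact absurd (hs.trans h'.symm) hne
              | true => rfl
            simp only [sigmaF, jLo, jHi, hs, hs', Bool.not_false, Bool.false_eq_true,
              if_false, if_true, hmin0, neg_zero]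
            exact disjoint_Ioo' le_rfl
        | true =>
            have hs' : s' i = false := by
              cases h' : s' i with
              | false => rfl
              | true => exact absurd (hs.trans h'.symm) hne
            simp only [sigmaF, jLo, jHi, hs, hs', Bool.not_true, Bool.false_eq_true,
              if_false, if_true, hmin0]
            exact (disjoint_Ioo' le_rfl).symm
    rintro (_ | s') (_ | s'') hne
    · exact absurd rfl hne
    · exact key s''
    · exact (key s').symm
    · have hne' : s' ≠ s'' := by intro h; exact hne (by rw [h])
      obtain ⟨i, hi⟩ := Function.ne_iff.mp hne'
      rw [interior_RBox, interior_RBox]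
      refine disjoint_pi_of_coord i.succ ?_
      simp only [betaLo, betaHi, Fin.cons_succ]
      exact hJ _ _ hi
  · -- (c)
    exact ⟨by simp [betaLo], by simp [betaHi], fun s' => by simp [betaLo]⟩
  · -- (d)
    refine continuous_pi fun o => Continuous.prodMk ?_ ?_ <;>
      refine continuous_pi fun i => ?_
    · match o with
      | none =>
          induction i using Fin.cases with
          | zero => simpa [betaLo] using (continuous_const : Continuous fun _ : Fin (m+1) → ℝ => (1/2:ℝ))
          | succ i =>
              simp only [betaLo, Fin.cons_succ]
              exact sigmaF_cont (s i) i
      | some s' =>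
          induction i using Fin.cases with
          | zero => simpa [betaLo] using (continuous_const : Continuous fun _ : Fin (m+1) → ℝ => (0:ℝ))
          | succ i => simpa [betaLo, Fin.cons_succ] using (continuous_const : Continuous fun _ : Fin (m+1) → ℝ => jLo (s' i))
    · match o with
      | none =>
          induction i using Fin.cases with
          | zero => simpa [betaHi] using (continuous_const : Continuous fun _ : Fin (m+1) → ℝ => (1:ℝ))
          | succ i =>
              simp only [betaHi, Fin.cons_succ]
              exact (sigmaF_cont (!(s i)) i).neg
      | some s' =>
          induction i using Fin.cases with
          | zero =>
              simp only [betaHi, Fin.cons_zero]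
              exact tauF_cont _
          | succ i => simpa [betaHi, Fin.cons_succ] using (continuous_const : Continuous fun _ : Fin (m+1) → ℝ => jHi (s' i))
end

section
/- Let n ≥ 1 and ⋆ ∈ {+,−}^n. (a) At the corner t = (1,…,1): the closed box of β^⋆_n(t) is [1/2,1]×∏_{i=1}^n J(⋆_i), the open box indexed by ⋆ is [0,1/2]×∏_{i=1}^n J(⋆_i), and the open box indexed by any ⋆' ≠ ⋆ is [0,1]×∏_{i=1}^n J(⋆'_i); this is exactly the configuration obtained from μ_n by open-type substitution of α_n into the open box of μ_n indexed by ⋆ (i.e., μ_n ∘_⋆ α_n). (b) At the corner t = (−1,…,−1): the closed box of β^⋆_n(t) is [1/2,1]×[−1,1]^n and every open box indexed by ⋆' is [0,1/2]×∏_{i=1}^n J(⋆'_i); this is exactly the configuration obtained from α_n by open-type substitution of μ_n into the open box of α_n (i.e., α_n ∘_o μ_n). In particular the value at the corner (−1,…,−1) does not depend on ⋆. -/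
/-- Lower endpoint vector of the box of `μ_k` indexed by the sign vector `s`. -/
def muLo {k : ℕ} (s : Fin k → Bool) : Fin (k+1) → ℝ := Fin.cons 0 fun i => jLo (s i)

/-- Upper endpoint vector of the box of `μ_k` indexed by the sign vector `s`. -/
def muHi {k : ℕ} (s : Fin k → Bool) : Fin (k+1) → ℝ := Fin.cons 1 fun i => jHi (s i)

/-- Lower endpoint vector of the closed box `[1/2,1] × [-1,1]^k` of `α_k`. -/
noncomputable def alphaCLo (k : ℕ) : Fin (k+1) → ℝ := Fin.cons (1/2) fun _ => -1

/-- Upper endpoint vector of the closed box of `α_k`. -/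
noncomputable def alphaCHi (k : ℕ) : Fin (k+1) → ℝ := Fin.cons 1 fun _ => 1

/-- Lower endpoint vector of the open box `[0,1/2] × [-1,1]^k` of `α_k`. -/
noncomputable def alphaOLo (k : ℕ) : Fin (k+1) → ℝ := Fin.cons 0 fun _ => -1

/-- Upper endpoint vector of the open box of `α_k`. -/
noncomputable def alphaOHi (k : ℕ) : Fin (k+1) → ℝ := Fin.cons (1/2) fun _ => 1

/-- The map `ψ_o` associated to an open-type box `o` recorded by its endpoint vectors. -/
noncomputable def psiV {n : ℕ} (lo hi : Fin (n+1) → ℝ) (x : Fin (n+1) → ℝ) :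
    Fin (n+1) → ℝ :=
  Fin.cons (hi 0 * x 0) fun i =>
    lo i.succ + (hi i.succ - lo i.succ) * (x i.succ + 1) / 2

lemma tau_le_half {k : ℕ} (s : Fin k → Bool) (t : Fin k → ℝ)
    (h : ∀ i, (if s i then (1/2 : ℝ) else (1 + t i) / 2) ≤ 1/2) :
    tauF s t = 1/2 := by
  refine le_antisymm ((Finset.fold_max_le _).2 ⟨le_rfl, fun i _ => h i⟩) ?_
  exact (Finset.le_fold_max _).2 (Or.inl le_rfl)

lemma tau_one {k : ℕ} (s : Fin k → Bool) (i₀ : Fin k) (h : s i₀ = false) :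
    tauF s (fun _ => 1) = 1 := by
  refine le_antisymm ((Finset.fold_max_le _).2 ⟨by norm_num, fun i _ => ?_⟩) ?_
  · split <;> norm_num
  · refine (Finset.le_fold_max _).2 (Or.inr ⟨i₀, Finset.mem_univ _, ?_⟩)
    simp [h]

/-- Values of `β^s_n` at the two corners of the cube (`n = m + 1`).
(a) At `t = (1,…,1)`, `β^s_n(t)` is exactly `μ_n ∘_s α_n`: the closed box is
`[1/2,1] × ∏ J(s i)`, the open box indexed by `s` is `[0,1/2] × ∏ J(s i)`, the open box
indexed by any `s' ≠ s` is the box of `μ_n` indexed by `s'`, and all boxes arise by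
open-type substitution of `α_n` into the open box of `μ_n` indexed by `s`.
(b) At `t = (-1,…,-1)`, `β^s_n(t)` is exactly `α_n ∘_o μ_n`: the closed box is that of
`α_n` and every open box indexed by `s'` is `[0,1/2] × ∏ J(s' i)`, arising by open-type
substitution of `μ_n` into the open box of `α_n`; in particular the value at this corner
does not depend on `s`. -/
theorem stmt6 (m : ℕ) (s : Fin (m+1) → Bool) :
    -- (a): the corner t = (1,…,1)
    (betaLo s (fun _ => 1) none = Fin.cons (1/2) (fun i => jLo (s i)) ∧
     betaHi s (fun _ => 1) none = Fin.cons 1 (fun i => jHi (s i)) ∧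
     betaLo s (fun _ => 1) (some s) = Fin.cons 0 (fun i => jLo (s i)) ∧
     betaHi s (fun _ => 1) (some s) = Fin.cons (1/2) (fun i => jHi (s i)) ∧
     (∀ s' : Fin (m+1) → Bool, s' ≠ s →
        betaLo s (fun _ => 1) (some s') = muLo s' ∧
        betaHi s (fun _ => 1) (some s') = muHi s') ∧
     betaLo s (fun _ => 1) none = psiV (muLo s) (muHi s) (alphaCLo (m+1)) ∧
     betaHi s (fun _ => 1) none = psiV (muLo s) (muHi s) (alphaCHi (m+1)) ∧
     betaLo s (fun _ => 1) (some s) = psiV (muLo s) (muHi s) (alphaOLo (m+1)) ∧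
     betaHi s (fun _ => 1) (some s) = psiV (muLo s) (muHi s) (alphaOHi (m+1))) ∧
    -- (b): the corner t = (-1,…,-1)
    (betaLo s (fun _ => -1) none = alphaCLo (m+1) ∧
     betaHi s (fun _ => -1) none = alphaCHi (m+1) ∧
     (∀ s' : Fin (m+1) → Bool,
        betaLo s (fun _ => -1) (some s') = Fin.cons 0 (fun i => jLo (s' i)) ∧
        betaHi s (fun _ => -1) (some s') = Fin.cons (1/2) (fun i => jHi (s' i)) ∧
        betaLo s (fun _ => -1) (some s') =
          psiV (alphaOLo (m+1)) (alphaOHi (m+1)) (muLo s') ∧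
        betaHi s (fun _ => -1) (some s') =
          psiV (alphaOLo (m+1)) (alphaOHi (m+1)) (muHi s')) ∧
     (∀ s₂ : Fin (m+1) → Bool, ∀ o : Option (Fin (m+1) → Bool),
        betaLo s (fun _ => -1) o = betaLo s₂ (fun _ => -1) o ∧
        betaHi s (fun _ => -1) o = betaHi s₂ (fun _ => -1) o)) := by
  have hs1 : ∀ b : Bool, sigmaF b 1 = jLo b := by
    intro b; cases b <;> simp [sigmaF, jLo]
  have hs1' : ∀ b : Bool, -sigmaF (!b) 1 = jHi b := by
    intro b; cases b <;> simp [sigmaF, jHi]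
  have hsneg : ∀ b : Bool, sigmaF b (-1) = -1 := by
    intro b; cases b <;> simp [sigmaF]
  have hjd : ∀ b : Bool, jHi b - jLo b = 1 := by
    intro b; cases b <;> simp [jHi, jLo]
  have htau_self : tauF (fun _ : Fin (m+1) => true) (fun _ => (1:ℝ)) = 1/2 := by
    apply tau_le_half; intro i; simp
  have htau_neg : ∀ f : Fin (m+1) → Bool,
      tauF f (fun _ => (-1:ℝ)) = 1/2 := by
    intro f; apply tau_le_half; intro i; split <;> norm_num
  refine ⟨⟨?_, ?_, ?_, ?_, ?_, ?_, ?_, ?_, ?_⟩, ?_, ?_, ?_, ?_⟩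
  · funext j; refine Fin.cases ?_ (fun i => ?_) j <;>
      simp [betaLo, hs1]
  · funext j; refine Fin.cases ?_ (fun i => ?_) j <;>
      simp [betaHi, hs1']
  · rfl
  · funext j; refine Fin.cases ?_ (fun i => ?_) j <;>
      simp [betaHi, htau_self]
  · intro s' hne
    obtain ⟨i₀, hi₀⟩ := Function.ne_iff.1 hne
    constructor
    · rfl
    · funext j; refine Fin.cases ?_ (fun i => ?_) j <;>
        simp [betaHi, muHi]
      exact tau_one _ i₀ (beq_eq_false_iff_ne.2 (Ne.symm hi₀))
  · funext j; refine Fin.cases ?_ (fun i => ?_) j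
    · simp [betaLo, psiV, muLo, muHi, alphaCLo]
    · simp [betaLo, psiV, muLo, muHi, alphaCLo, hs1]
  · funext j; refine Fin.cases ?_ (fun i => ?_) j
    · simp [betaHi, psiV, muLo, muHi, alphaCHi]
    · simp [betaHi, psiV, muLo, muHi, alphaCHi, hs1']
      cases s i <;> norm_num [jHi, jLo]
  · funext j; refine Fin.cases ?_ (fun i => ?_) j
    · simp [betaLo, psiV, muLo, muHi, alphaOLo]
    · simp [betaLo, psiV, muLo, muHi, alphaOLo]
  · funext j; refine Fin.cases ?_ (fun i => ?_) j
    · simp [betaHi, psiV, muLo, muHi, alphaOHi, htau_self]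
    · simp [betaHi, psiV, muLo, muHi, alphaOHi]
      cases s i <;> norm_num [jHi, jLo]
  · funext j; refine Fin.cases ?_ (fun i => ?_) j <;>
      simp [betaLo, alphaCLo, hsneg]
  · funext j; refine Fin.cases ?_ (fun i => ?_) j <;>
      simp [betaHi, alphaCHi, hsneg]
  · intro s'
    refine ⟨rfl, ?_, ?_, ?_⟩
    · funext j; refine Fin.cases ?_ (fun i => ?_) j <;>
        simp [betaHi, htau_neg]
    · funext j; refine Fin.cases ?_ (fun i => ?_) j <;>
        simp [betaLo, psiV, alphaOLo, alphaOHi, muLo, jLo]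
      cases s' i <;> norm_num
    · funext j; refine Fin.cases ?_ (fun i => ?_) j <;>
        simp [betaHi, psiV, alphaOLo, alphaOHi, muHi, jHi, htau_neg]
      cases s' i <;> norm_num
  · intro s₂ o
    cases o with
    | none =>
        constructor <;> funext j <;> refine Fin.cases ?_ (fun i => ?_) j <;>
          simp [betaLo, betaHi, hsneg]
    | some s' =>
        refine ⟨rfl, ?_⟩
        funext j; refine Fin.cases ?_ (fun i => ?_) j <;>
          simp [betaHi, htau_neg]
end

section
/- Let n ≥ 1, ⋆ ∈ {+,−}^n, i ∈ {1,…,n}, and t ∈ [−1,1]^n with t_i = −1. Then: (a) β^⋆_n(t) = β^{⋆''}_n(t) for every ⋆'' ∈ {+,−}^n agreeing with ⋆ in all coordinates j ≠ i (the restriction of β^⋆_n to the face t_i = −1 is independent of ⋆_i); (b) the closed box of β^⋆_n(t) equals [1/2,1] times the product whose i-th factor is [−1,1] and whose j-th factor (j ≠ i) is [σ_{⋆_j}(t_j), −σ_{−⋆_j}(t_j)], and for every ⋆' ∈ {+,−}^n the open box indexed by ⋆' equals [0, τ_{(⋆⋆')|_{j≠i}}((t_j)_{j≠i})]×∏_{j=1}^n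 J(⋆'_j); (c) equivalently, β^⋆_n(t) is the configuration obtained from ι_{{i}}(β^{(⋆_j)_{j≠i}}_{n−1}((t_j)_{j≠i})) by open-type substitution of a copy of ι_{{1,…,n}∖{i}}(μ_1) into each of its open boxes. (This is the facet identity d^−_i β^⋆_n = β ∘ μ used in the proof that the chain η_n is closed.) -/
lemma fold_max_succAbove {k : ℕ} (i : Fin (k+1)) (g : Fin (k+1) → ℝ) (b : ℝ) (h : g i ≤ b) :
    Finset.univ.fold max b g = Finset.univ.fold max b (fun j : Fin k => g (i.succAbove j)) := by
  have huniv : (Finset.univ : Finset (Fin (k+1))) = insert i ({i}ᶜ) := by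
    simp
  rw [huniv, Finset.fold_insert (by simp), ← Fin.image_succAbove_univ i,
    Finset.fold_image (fun x _ y _ hxy => i.succAbove_right_injective hxy)]
  exact max_eq_right (h.trans ((Finset.le_fold_max b).mpr (Or.inl le_rfl)))

lemma tauF_removeNth {k : ℕ} (i : Fin (k+1)) (s : Fin (k+1) → Bool) (t : Fin (k+1) → ℝ)
    (hti : t i = -1) : tauF s t = tauF (i.removeNth s) (i.removeNth t) := by
  apply fold_max_succAbove
  rw [hti]
  by_cases h : s i <;> simp [h]

/-- The facet `t_i = -1` of `β^s_n` (here `n = m + 1`; tail coordinates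
`1, …, n` of `ℝ^{n+1}` are identified with `Fin (m+1)`, so `i : Fin (m+1)` denotes the
coordinate `i + 1`).  (a) The restriction of `β^s_n` to this facet does not depend on
`s_i`.  (b) The closed box is `[1/2,1]` times the product with `i`-th factor `[-1,1]` and
`j`-th factor `[σ_{s j}(t j), -σ_{-(s j)}(t j)]` for `j ≠ i`, and the open box indexed by
`s'` is `[0, τ_{(s·s')|_{j≠i}}((t_j)_{j≠i})] × ∏ J(s' j)`.  (c) Equivalently, `β^s_n(t)`
is obtained from `ι_{{i}}(β^{s∖i}_{n-1}((t_j)_{j≠i}))` by open-type substitution of a copy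
of `ι_{{1,…,n}∖{i}}(μ_1)` into each of its open boxes. -/
theorem stmt7 (m : ℕ) (s : Fin (m+1) → Bool) (i : Fin (m+1)) (t : Fin (m+1) → ℝ)
    (ht : ∀ j, t j ∈ Set.Icc (-1 : ℝ) 1) (hti : t i = -1) :
    -- (a)
    (∀ s'' : Fin (m+1) → Bool, (∀ j, j ≠ i → s'' j = s j) →
      ∀ o : Option (Fin (m+1) → Bool),
        betaLo s'' t o = betaLo s t o ∧ betaHi s'' t o = betaHi s t o) ∧
    -- (b)
    (betaLo s t none =
        Fin.cons (1/2) (fun j => if j = i then -1 else sigmaF (s j) (t j)) ∧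
     betaHi s t none =
        Fin.cons 1 (fun j => if j = i then 1 else -sigmaF (!(s j)) (t j)) ∧
     (∀ s' : Fin (m+1) → Bool,
        betaHi s t (some s') =
          Fin.cons (tauF (i.removeNth fun j => s j == s' j) (i.removeNth t))
            (fun j => jHi (s' j)))) ∧
    -- (c): substitution description
    ((∀ (s'' : Fin m → Bool) (b : Bool),
      psiV
        (Fin.cons 0 (i.insertNth (-1) fun j => jLo (s'' j)))
        (Fin.cons (tauF (fun j => i.removeNth s j == s'' j) (i.removeNth t))
          (i.insertNth 1 fun j => jHi (s'' j)))
        (Fin.cons 0 fun j => if j = i then jLo b else -1)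
        = betaLo s t (some (i.insertNth b s'')) ∧
      psiV
        (Fin.cons 0 (i.insertNth (-1) fun j => jLo (s'' j)))
        (Fin.cons (tauF (fun j => i.removeNth s j == s'' j) (i.removeNth t))
          (i.insertNth 1 fun j => jHi (s'' j)))
        (Fin.cons 1 fun j => if j = i then jHi b else 1)
        = betaHi s t (some (i.insertNth b s''))) ∧
     (Fin.cons (1/2)
        (i.insertNth (-1) fun j => sigmaF (i.removeNth s j) (i.removeNth t j))
        = betaLo s t none ∧
      Fin.cons 1
        (i.insertNth 1 fun j => -sigmaF (!(i.removeNth s j)) (i.removeNth t j))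
        = betaHi s t none)) := by
  have key : ∀ (s₁ : Fin (m+1) → Bool),
      tauF s₁ t = tauF (i.removeNth s₁) (i.removeNth t) :=
    fun s₁ => tauF_removeNth i s₁ t hti
  refine ⟨?_, ⟨?_, ?_, ?_⟩, ?_, ?_, ?_⟩
  · -- (a)
    intro s'' hs'' o
    cases o with
    | none =>
      constructor <;> (funext j; refine Fin.cases ?_ (fun j => ?_) j) <;>
        simp only [betaLo, betaHi, Fin.cons_zero, Fin.cons_succ]
      · by_cases h : j = i
        · subst h; rw [hti]
          by_cases h1 : s j <;> by_cases h2 : s'' j <;> simp [sigmaF, h1, h2]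
        · rw [hs'' j h]
      · by_cases h : j = i
        · subst h; rw [hti]
          by_cases h1 : s j <;> by_cases h2 : s'' j <;> simp [sigmaF, h1, h2]
        · rw [hs'' j h]
    | some s' =>
      refine ⟨rfl, ?_⟩
      funext j
      refine Fin.cases ?_ (fun j => ?_) j <;>
        simp only [betaHi, Fin.cons_zero, Fin.cons_succ]
      rw [key, key]
      congr 1
      funext j
      simp only [Fin.removeNth]
      rw [hs'' _ (Fin.succAbove_ne i j)]
  · -- (b) lo none
    funext j
    refine Fin.cases rfl (fun j => ?_) j
    simp only [betaLo, Fin.cons_succ]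
    by_cases h : j = i
    · subst h; simp [sigmaF, hti]
    · simp [h]
  · -- (b) hi none
    funext j
    refine Fin.cases rfl (fun j => ?_) j
    simp only [betaHi, Fin.cons_succ]
    by_cases h : j = i
    · subst h; by_cases h1 : s j <;> simp [sigmaF, hti, h1]
    · simp [h]
  · -- (b) hi some
    intro s'
    simp only [betaHi]
    rw [key]
  · -- (c) open boxes
    intro s'' b
    have htau : tauF (fun j => i.removeNth s j == s'' j) (i.removeNth t)
        = tauF (fun j => s j == Fin.insertNth (α := fun _ => Bool) i b s'' j) t := by
      rw [key]
      congr 1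
      funext j
      simp [Fin.removeNth, Fin.insertNth_apply_succAbove]
    constructor
    · funext j
      refine Fin.cases ?_ (fun j => ?_) j
      · simp [psiV, betaLo]
      · simp only [psiV, betaLo, Fin.cons_succ]
        by_cases h : j = i
        · subst h
          simp only [Fin.insertNth_apply_same, if_pos rfl, if_true]
          ring
        · obtain ⟨k, rfl⟩ := Fin.exists_succAbove_eq h
          simp only [Fin.insertNth_apply_succAbove, if_neg (Fin.succAbove_ne i k)]
          ring
    · funext j
      refine Fin.cases ?_ (fun j => ?_) j
      · simp only [psiV, betaHi, Fin.cons_zero, htau]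
        ring
      · simp only [psiV, betaHi, Fin.cons_succ]
        by_cases h : j = i
        · subst h
          simp only [Fin.insertNth_apply_same, if_pos rfl, if_true]
          ring
        · obtain ⟨k, rfl⟩ := Fin.exists_succAbove_eq h
          simp only [Fin.insertNth_apply_succAbove, if_neg (Fin.succAbove_ne i k)]
          ring
  · -- (c) closed box lo
    funext j
    refine Fin.cases rfl (fun j => ?_) j
    simp only [betaLo, Fin.cons_succ]
    by_cases h : j = i
    · subst h; simp [Fin.insertNth_apply_same, sigmaF, hti]
    · obtain ⟨k, rfl⟩ := Fin.exists_succAbove_eq h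
      simp [Fin.insertNth_apply_succAbove, Fin.removeNth]
  · -- (c) closed box hi
    funext j
    refine Fin.cases rfl (fun j => ?_) j
    simp only [betaHi, Fin.cons_succ]
    by_cases h : j = i
    · subst h
      by_cases h1 : s j <;> simp [Fin.insertNth_apply_same, sigmaF, hti, h1]
    · obtain ⟨k, rfl⟩ := Fin.exists_succAbove_eq h
      simp [Fin.insertNth_apply_succAbove, Fin.removeNth]
end
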